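/- Let A and B be normal complex n×n matrices. Then ‖ |A| − |B| ‖_F ≤ ‖A − B‖_F, where |A| = (AᴴA)^{1/2} and |B| = (BᴴB)^{1/2}. -/

import Mathlib

open scoped BigOperators Matrix ComplexOrder

noncomputable def frob {m n : ℕ} (A : Matrix (Fin m) (Fin n) ℂ) : ℝ :=
  Real.sqrt (∑ i, ∑ j, ‖A i j‖ ^ 2)

noncomputable def absMat {m n : ℕ} (A : Matrix (Fin m) (Fin n) ℂ) :
    Matrix (Fin n) (Fin n) ℂ :=
  (Matrix.posSemidef_conjTranspose_mul_self A).isHermitian.eigenvectorUnitary.1 *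
    Matrix.diagonal ((↑) ∘ Real.sqrt ∘
      (Matrix.posSemidef_conjTranspose_mul_self A).isHermitian.eigenvalues) *
    (star (Matrix.posSemidef_conjTranspose_mul_self A).isHermitian.eigenvectorUnitary :
      Matrix (Fin n) (Fin n) ℂ)

noncomputable def svdMat (m n r : ℕ) (σ : ℕ → ℝ) : Matrix (Fin m) (Fin n) ℂ :=
  Matrix.of fun i j =>
    if (i : ℕ) = (j : ℕ) ∧ (i : ℕ) < r then ((σ ((i : ℕ) + 1) : ℝ) : ℂ) else 0

/-- `A` admits a singular value decomposition with singular values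
`σ 1, …, σ r` (indexed from 1) on the diagonal. -/
def HasSVD {m n : ℕ} (A : Matrix (Fin m) (Fin n) ℂ) (r : ℕ) (σ : ℕ → ℝ) : Prop :=
  ∃ (U : Matrix (Fin m) (Fin m) ℂ) (V : Matrix (Fin n) (Fin n) ℂ),
    Uᴴ * U = 1 ∧ U * Uᴴ = 1 ∧ Vᴴ * V = 1 ∧ V * Vᴴ = 1 ∧
    A = U * svdMat m n r σ * Vᴴ

/-- `σ 1 ≥ σ 2 ≥ … ≥ σ r > 0`. -/
def SingVals (r : ℕ) (σ : ℕ → ℝ) : Prop :=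
  (∀ j, 1 ≤ j → j ≤ r → 0 < σ j) ∧ ∀ j, 1 ≤ j → j < r → σ (j + 1) ≤ σ j

/-- Generalized polar decomposition: `A = Q * |A|`, where `Q` is a rank-`r` partial
isometry such that the column space of `Qᴴ` equals the column space of `|A|`. -/
def IsPolar {m n : ℕ} (A Q : Matrix (Fin m) (Fin n) ℂ) (r : ℕ) : Prop :=
  A = Q * absMat A ∧ Q * Qᴴ * Q = Q ∧ Q.rank = r ∧
    LinearMap.range (Matrix.mulVecLin Qᴴ) =
      LinearMap.range (Matrix.mulVecLin (absMat A))

/-!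
For Hermitian `X = U diag(λ) U⋆` and `Y = V diag(μ) V⋆`, unitary invariance of the Frobenius
norm gives `‖f(X) - f(Y)‖² = ∑ᵢⱼ (f λᵢ - f μⱼ)² |(U⋆V)ᵢⱼ|²`, so a `K`-Lipschitz `f : ℝ → ℝ` is
`K`-Lipschitz in the Frobenius norm on Hermitian matrices; `f = |·|` is the Hermitian case.
For arbitrary `A`, the Hermitian dilation `[[0, A], [A⋆, 0]]` has absolute value
`diag(|A⋆|, |A|)`, whence `‖|A⋆| - |B⋆|‖² + ‖|A| - |B|‖² ≤ 2 ‖A - B‖²`; for normal `A` and `B`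
the two terms on the left coincide.
-/

open scoped MatrixOrder
open Matrix CFC

section Frobenius

variable {𝕜 : Type*} [RCLike 𝕜] {l m n o : Type*} [Fintype l] [Fintype m] [Fintype n]
  [Fintype o]

noncomputable def frobSq (M : Matrix m n 𝕜) : ℝ := ∑ i, ∑ j, ‖M i j‖ ^ 2

lemma frobSq_zero : frobSq (0 : Matrix m n 𝕜) = 0 := by
  simp [frobSq]

lemma frobSq_eq_re_trace (M : Matrix m n 𝕜) : frobSq M = RCLike.re (Mᴴ * M).trace := by
  simp only [frobSq, trace, diag_apply, mul_apply, conjTranspose_apply, map_sum,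
    RCLike.star_def, RCLike.conj_mul]
  rw [Finset.sum_comm]
  norm_cast

lemma frobSq_conjTranspose (M : Matrix m n 𝕜) : frobSq Mᴴ = frobSq M := by
  simp only [frobSq, conjTranspose_apply, norm_star]
  exact Finset.sum_comm

lemma frobSq_fromBlocks (A : Matrix l m 𝕜) (B : Matrix l n 𝕜) (C : Matrix o m 𝕜)
    (D : Matrix o n 𝕜) :
    frobSq (fromBlocks A B C D) = frobSq A + frobSq B + frobSq C + frobSq D := by
  simp only [frobSq, Fintype.sum_sum_type, fromBlocks_apply₁₁, fromBlocks_apply₁₂,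
    fromBlocks_apply₂₁, fromBlocks_apply₂₂, Finset.sum_add_distrib]
  ring

lemma frobSq_unitary_mul [DecidableEq n] {U : Matrix n n 𝕜} (hU : U ∈ unitary (Matrix n n 𝕜))
    (M : Matrix n n 𝕜) : frobSq (U * M) = frobSq M := by
  have hUU : Uᴴ * U = 1 := Unitary.star_mul_self_of_mem hU
  rw [frobSq_eq_re_trace, frobSq_eq_re_trace, conjTranspose_mul, mul_assoc, ← mul_assoc Uᴴ, hUU,
    one_mul]

lemma frobSq_mul_unitary [DecidableEq n] {V : Matrix n n 𝕜} (hV : V ∈ unitary (Matrix n n 𝕜))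
    (M : Matrix n n 𝕜) : frobSq (M * V) = frobSq M := by
  rw [← frobSq_conjTranspose, conjTranspose_mul, ← star_eq_conjTranspose,
    frobSq_unitary_mul (Unitary.star_mem hV), frobSq_conjTranspose]

lemma frobSq_diagonal_mul_sub_mul_diagonal [DecidableEq n] (d e : n → ℝ) (W : Matrix n n 𝕜) :
    frobSq (diagonal (RCLike.ofReal ∘ d) * W - W * diagonal (RCLike.ofReal ∘ e)) =
      ∑ i, ∑ j, (d i - e j) ^ 2 * ‖W i j‖ ^ 2 := by
  unfold frobSq
  refine Finset.sum_congr rfl fun i _ => Finset.sum_congr rfl fun j _ => ?_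
  simp only [Matrix.sub_apply, diagonal_mul, mul_diagonal, Function.comp_apply]
  rw [mul_comm (W i j), ← sub_mul, ← RCLike.ofReal_sub, norm_mul, RCLike.norm_ofReal, mul_pow,
    sq_abs]

end Frobenius

section Hermitian

variable {𝕜 : Type*} [RCLike 𝕜] {n : Type*} [Fintype n] [DecidableEq n]
  {X Y : Matrix n n 𝕜}

lemma Matrix.IsHermitian.star_eigenvectorUnitary_mul_cfc (hX : X.IsHermitian) (f : ℝ → ℝ) :
    star (hX.eigenvectorUnitary : Matrix n n 𝕜) * cfc f X =
      diagonal (RCLike.ofReal ∘ f ∘ hX.eigenvalues) *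
        star (hX.eigenvectorUnitary : Matrix n n 𝕜) := by
  rw [hX.cfc_eq, IsHermitian.cfc, Unitary.conjStarAlgAut_apply, ← Matrix.mul_assoc,
    ← Matrix.mul_assoc, Unitary.coe_star_mul_self, Matrix.one_mul]

lemma Matrix.IsHermitian.cfc_mul_eigenvectorUnitary (hY : Y.IsHermitian) (f : ℝ → ℝ) :
    cfc f Y * (hY.eigenvectorUnitary : Matrix n n 𝕜) =
      (hY.eigenvectorUnitary : Matrix n n 𝕜) * diagonal (RCLike.ofReal ∘ f ∘ hY.eigenvalues) := by
  rw [hY.cfc_eq, IsHermitian.cfc, Unitary.conjStarAlgAut_apply, Matrix.mul_assoc,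
    Unitary.coe_star_mul_self, Matrix.mul_one]

lemma frobSq_cfc_sub_cfc (hX : X.IsHermitian) (hY : Y.IsHermitian) (f : ℝ → ℝ) :
    frobSq (cfc f X - cfc f Y) =
      ∑ i, ∑ j, (f (hX.eigenvalues i) - f (hY.eigenvalues j)) ^ 2 *
        ‖(star (hX.eigenvectorUnitary : Matrix n n 𝕜) * hY.eigenvectorUnitary) i j‖ ^ 2 := by
  rw [← frobSq_mul_unitary hY.eigenvectorUnitary.2,
    ← frobSq_unitary_mul (Unitary.star_mem hX.eigenvectorUnitary.2), sub_mul, mul_sub,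
    hY.cfc_mul_eigenvectorUnitary, ← mul_assoc, hX.star_eigenvectorUnitary_mul_cfc,
    mul_assoc (diagonal _), ← mul_assoc (star _), frobSq_diagonal_mul_sub_mul_diagonal]
  rfl

lemma frobSq_cfc_sub_cfc_le (hX : X.IsHermitian) (hY : Y.IsHermitian) {f : ℝ → ℝ} {K : NNReal}
    (hf : LipschitzWith K f) :
    frobSq (cfc f X - cfc f Y) ≤ K ^ 2 * frobSq (X - Y) := by
  conv_rhs => rw [← cfc_id ℝ X, ← cfc_id ℝ Y]
  simp only [frobSq_cfc_sub_cfc hX hY, Finset.mul_sum, ← mul_assoc, id]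
  gcongr with i _ j _
  have h := hf.dist_le_mul (hX.eigenvalues i) (hY.eigenvalues j)
  rw [Real.dist_eq, Real.dist_eq] at h
  calc (f (hX.eigenvalues i) - f (hY.eigenvalues j)) ^ 2
      = |f (hX.eigenvalues i) - f (hY.eigenvalues j)| ^ 2 := (sq_abs _).symm
    _ ≤ (K * |hX.eigenvalues i - hY.eigenvalues j|) ^ 2 := by gcongr
    _ = K ^ 2 * (hX.eigenvalues i - hY.eigenvalues j) ^ 2 := by rw [mul_pow, sq_abs]

lemma frobSq_abs_sub_abs_le (hX : X.IsHermitian) (hY : Y.IsHermitian) :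
    frobSq (CFC.abs X - CFC.abs Y) ≤ frobSq (X - Y) := by
  rw [CFC.abs_eq_cfc_norm X hX.isSelfAdjoint, CFC.abs_eq_cfc_norm Y hY.isSelfAdjoint]
  simpa only [NNReal.coe_one, one_pow, one_mul] using
    frobSq_cfc_sub_cfc_le hX hY (lipschitzWith_one_norm (E := ℝ))

end Hermitian

theorem Matrix.fromBlocks_sub {l m n o α : Type*} [Sub α] (A : Matrix n l α) (B : Matrix n m α)
    (C : Matrix o l α) (D : Matrix o m α) (A' : Matrix n l α) (B' : Matrix n m α)
    (C' : Matrix o l α) (D' : Matrix o m α) :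
    fromBlocks A B C D - fromBlocks A' B' C' D' =
      fromBlocks (A - A') (B - B') (C - C') (D - D') := by
  ext (i | i) (j | j) <;> rfl

section Dilation

variable {𝕜 : Type*} [RCLike 𝕜] {m n : Type*}

def hermitianDilation (A : Matrix m n 𝕜) : Matrix (m ⊕ n) (m ⊕ n) 𝕜 :=
  fromBlocks 0 A Aᴴ 0

lemma isHermitian_hermitianDilation (A : Matrix m n 𝕜) : (hermitianDilation A).IsHermitian := by
  simp [hermitianDilation, IsHermitian, fromBlocks_conjTranspose]

variable [Fintype m] [Fintype n] [DecidableEq m] [DecidableEq n]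

lemma fromBlocks_zero_nonneg {P : Matrix m m 𝕜} {Q : Matrix n n 𝕜} (hP : 0 ≤ P) (hQ : 0 ≤ Q) :
    0 ≤ fromBlocks P 0 0 Q := by
  have hsq : fromBlocks P 0 0 Q =
      star (fromBlocks (sqrt P) 0 0 (sqrt Q)) * fromBlocks (sqrt P) 0 0 (sqrt Q) := by
    rw [star_eq_conjTranspose, fromBlocks_conjTranspose, fromBlocks_multiply,
      ← star_eq_conjTranspose, ← star_eq_conjTranspose, (sqrt_nonneg P).isSelfAdjoint.star_eq,
      (sqrt_nonneg Q).isSelfAdjoint.star_eq, sqrt_mul_sqrt_self P, sqrt_mul_sqrt_self Q]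
    simp
  rw [hsq]
  exact star_mul_self_nonneg _

lemma sqrt_fromBlocks_zero {P : Matrix m m 𝕜} {Q : Matrix n n 𝕜} (hP : 0 ≤ P) (hQ : 0 ≤ Q) :
    sqrt (fromBlocks P 0 0 Q) = fromBlocks (sqrt P) 0 0 (sqrt Q) := by
  refine sqrt_unique ?_ (fromBlocks_zero_nonneg (sqrt_nonneg P) (sqrt_nonneg Q))
  rw [fromBlocks_multiply, sqrt_mul_sqrt_self P, sqrt_mul_sqrt_self Q]
  simp

lemma abs_hermitianDilation (A : Matrix m n 𝕜) :
    CFC.abs (hermitianDilation A) = fromBlocks (sqrt (A * Aᴴ)) 0 0 (sqrt (Aᴴ * A)) := by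
  have hsq :
      star (hermitianDilation A) * hermitianDilation A = fromBlocks (A * Aᴴ) 0 0 (Aᴴ * A) := by
    simp [hermitianDilation, star_eq_conjTranspose, fromBlocks_conjTranspose, fromBlocks_multiply]
  rw [CFC.abs, hsq, sqrt_fromBlocks_zero (posSemidef_self_mul_conjTranspose A).nonneg
    (posSemidef_conjTranspose_mul_self A).nonneg]

lemma frobSq_sqrt_sub_sqrt_add_le (A B : Matrix m n 𝕜) :
    frobSq (sqrt (A * Aᴴ) - sqrt (B * Bᴴ)) + frobSq (sqrt (Aᴴ * A) - sqrt (Bᴴ * B)) ≤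
      2 * frobSq (A - B) := by
  have h := frobSq_abs_sub_abs_le (isHermitian_hermitianDilation A)
    (isHermitian_hermitianDilation B)
  rw [abs_hermitianDilation, abs_hermitianDilation, hermitianDilation, hermitianDilation,
    fromBlocks_sub, fromBlocks_sub, frobSq_fromBlocks, frobSq_fromBlocks, ← conjTranspose_sub,
    frobSq_conjTranspose] at h
  simp only [sub_zero, frobSq_zero] at h
  linarith

end Dilation

lemma absMat_eq_sqrt {m n : ℕ} (A : Matrix (Fin m) (Fin n) ℂ) : absMat A = sqrt (Aᴴ * A) := by
  have hA := posSemidef_conjTranspose_mul_self A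
  rw [sqrt_eq_real_sqrt _ hA.nonneg, cfcₙ_eq_cfc, hA.isHermitian.cfc_eq, IsHermitian.cfc,
    Unitary.conjStarAlgAut_apply]
  rfl

theorem kittaneh_normal
    (n : ℕ) (A B : Matrix (Fin n) (Fin n) ℂ)
    (hA : A * Aᴴ = Aᴴ * A) (hB : B * Bᴴ = Bᴴ * B) :
    frob (absMat A - absMat B) ≤ frob (A - B) := by
  have h := frobSq_sqrt_sub_sqrt_add_le A B
  rw [hA, hB] at h
  have key : frobSq (sqrt (Aᴴ * A) - sqrt (Bᴴ * B)) ≤ frobSq (A - B) := by linarith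
  rw [absMat_eq_sqrt, absMat_eq_sqrt]
  exact Real.sqrt_le_sqrt key
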